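/- arXiv:1705.07785 — 6 statements merged into one kernel-verified Lean document; each statement's English description precedes it below -/
import Mathlib

section
/- For every integer q ≥ 2, the function α_HS on [0,1], defined by α_HS(x) = 1 − H_q(x/2) for x ∈ [0, 2/q] and α_HS(x) = (1−x) log_q(q−1) for x ∈ [2/q, 1], is convex on [0,1], continuously differentiable on (0,1), and satisfies α_HS(x) ≤ 1 − H_q(x/2) (the Hamming bound) and α_HS(x) ≤ 1 − x (the Singleton bound) for all x ∈ [0,1]. -/
/-!
On `[0, 2/q]`, `α_HS` is the Hamming bound `f x = 1 - H_q(x/2)`, whose derivative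
`f' x = (log_q (x/2) - log_q (1 - x/2) - log_q (q-1)) / 2` is increasing; on `[2/q, 1]` it is the
tangent line to `f` at `2/q`, of slope `f' (2/q) = -log_q (q-1)`. Hence `α_HS` is differentiable
with derivative `f' (min x (2/q))`, which is continuous and increasing, so `α_HS` is `C¹` and
convex. By the mean value theorem the tangent line stays below `f` to the right of `2/q`
(Hamming bound), and the convex `α_HS`, with `α_HS 0 = 1` and `α_HS 1 = 0`, stays below its
chord `1 - x` (Singleton bound).
-/

open Filter Real Set

/-- The q-ary entropy function. -/
noncomputable def qEntropy (q : ℕ) (x : ℝ) : ℝ :=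
  x * Real.logb q (((q : ℝ) - 1) / x) + (1 - x) * Real.logb q (1 / (1 - x))

/-- The hybrid Hamming-Singleton bound `α_HS`. -/
noncomputable def alphaHS (q : ℕ) (x : ℝ) : ℝ :=
  if x ≤ 2 / (q : ℝ) then 1 - qEntropy q (x / 2) else (1 - x) * Real.logb q ((q : ℝ) - 1)

lemma qEntropy_eq_qaryEntropy_div_log (q : ℕ) (y : ℝ) :
    qEntropy q y = qaryEntropy q y / log q := by
  rcases eq_or_ne (q : ℝ) 1 with hq | hq
  · simp [qEntropy, logb, hq]
  rcases eq_or_ne y 0 with rfl | hy0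
  · simp [qEntropy]
  have hq1 : (q : ℝ) - 1 ≠ 0 := sub_ne_zero.2 hq
  simp only [qEntropy, qaryEntropy, binEntropy, logb, log_div hq1 hy0, one_div, log_inv]
  push_cast
  ring

noncomputable def hammingBound (q : ℕ) (x : ℝ) : ℝ := 1 - qEntropy q (x / 2)

noncomputable def hammingTangent (q : ℕ) (x : ℝ) : ℝ := (1 - x) * logb q (q - 1)

noncomputable def hammingBoundDeriv (q : ℕ) (x : ℝ) : ℝ :=
  (logb q (x / 2) - logb q (1 - x / 2) - logb q (q - 1)) / 2

lemma alphaHS_eq_ite (q : ℕ) :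
    alphaHS q = fun x => if x ≤ 2 / (q : ℝ) then hammingBound q x else hammingTangent q x := rfl

lemma hammingBound_eq (q : ℕ) :
    hammingBound q = fun x => 1 - qaryEntropy q (x / 2) / log q := by
  ext x
  rw [hammingBound, qEntropy_eq_qaryEntropy_div_log]

lemma continuous_hammingBound (q : ℕ) : Continuous (hammingBound q) := by
  rw [hammingBound_eq]
  fun_prop

lemma hasDerivAt_hammingBound (q : ℕ) {x : ℝ} (h0 : 0 < x) (h2 : x < 2) :
    HasDerivAt (hammingBound q) (hammingBoundDeriv q x) x := by
  have hH := (hasDerivAt_qaryEntropy (q := q) (p := x / 2) (by positivity) (by linarith)).comp x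
    ((hasDerivAt_id x).div_const 2)
  rw [hammingBound_eq]
  refine ((hH.div_const (log q)).const_sub 1).congr_deriv ?_
  simp only [hammingBoundDeriv, logb]
  ring

lemma hasDerivAt_hammingTangent (q : ℕ) (x : ℝ) :
    HasDerivAt (hammingTangent q) (-logb q (q - 1)) x := by
  refine (((hasDerivAt_id x).const_sub 1).mul_const (logb q (q - 1))).congr_deriv ?_
  ring

lemma monotoneOn_hammingBoundDeriv {q : ℕ} (hq : 2 ≤ q) :
    MonotoneOn (hammingBoundDeriv q) (Ioo 0 2) := by
  have hq' : (1 : ℝ) < q := Nat.one_lt_cast.mpr hq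
  intro x hx y hy hxy
  have h1 : logb q (x / 2) ≤ logb q (y / 2) :=
    logb_le_logb_of_le hq' (by linarith [hx.1]) (by linarith)
  have h2 : logb q (1 - y / 2) ≤ logb q (1 - x / 2) :=
    logb_le_logb_of_le hq' (by linarith [hy.2]) (by linarith)
  simp only [hammingBoundDeriv]
  linarith

lemma continuousOn_hammingBoundDeriv (q : ℕ) : ContinuousOn (hammingBoundDeriv q) (Ioo 0 2) := by
  unfold hammingBoundDeriv
  refine ContinuousOn.div_const (ContinuousOn.sub (ContinuousOn.sub ?_ ?_) continuousOn_const) 2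
  · exact ContinuousOn.logb (by fun_prop) fun x hx => by linarith [hx.1]
  · exact ContinuousOn.logb (by fun_prop) fun x hx => by linarith [hx.2]

lemma hammingBoundDeriv_two_div {q : ℕ} (hq : 2 ≤ q) :
    hammingBoundDeriv q (2 / q) = -logb q (q - 1) := by
  have hq' : (1 : ℝ) < q := Nat.one_lt_cast.mpr hq
  have hq0 : (q : ℝ) ≠ 0 := by positivity
  have hq1 : (q : ℝ) - 1 ≠ 0 := by linarith
  rw [hammingBoundDeriv, show (2 : ℝ) / q / 2 = 1 / q by ring,
    show 1 - 1 / (q : ℝ) = (q - 1) / q by field_simp, logb_div one_ne_zero hq0,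
    logb_div hq1 hq0, logb_self_eq_one hq', logb_one]
  ring

lemma hammingBound_two_div {q : ℕ} (hq : 2 ≤ q) :
    hammingBound q (2 / q) = hammingTangent q (2 / q) := by
  have hq' : (1 : ℝ) < q := Nat.one_lt_cast.mpr hq
  have hq0 : (q : ℝ) ≠ 0 := by positivity
  have hq1 : (q : ℝ) - 1 ≠ 0 := by linarith
  rw [hammingBound, hammingTangent, qEntropy, show (2 : ℝ) / q / 2 = 1 / q by ring,
    show 1 - 1 / (q : ℝ) = (q - 1) / q by field_simp, div_div_eq_mul_div, one_div_div,
    div_one, logb_mul hq1 hq0, logb_div hq0 hq1, logb_self_eq_one hq']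
  field_simp
  ring

lemma HasDerivAt.ite_le {f g : ℝ → ℝ} {c a : ℝ} (hf : HasDerivAt f c a) (hg : HasDerivAt g c a)
    (hfg : f a = g a) : HasDerivAt (fun x => if x ≤ a then f x else g x) c a := by
  have hleft : HasDerivWithinAt (fun x => if x ≤ a then f x else g x) c (Iic a) a :=
    hf.hasDerivWithinAt.congr (fun x hx => if_pos hx) (if_pos le_rfl)
  have hright : HasDerivWithinAt (fun x => if x ≤ a then f x else g x) c (Ici a) a := by
    refine hg.hasDerivWithinAt.congr (fun x hx => ?_) (by simp [hfg])
    rcases (mem_Ici.1 hx).eq_or_lt with rfl | hlt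
    · simp [hfg]
    · exact if_neg hlt.not_ge
  simpa [Iic_union_Ici] using hleft.union hright

lemma hasDerivAt_alphaHS {q : ℕ} (hq : 2 ≤ q) {x : ℝ} (h0 : 0 < x) (h2 : x < 2) :
    HasDerivAt (alphaHS q) (hammingBoundDeriv q (min x (2 / q))) x := by
  rw [alphaHS_eq_ite]
  rcases lt_trichotomy x (2 / q) with hlt | rfl | hgt
  · rw [min_eq_left hlt.le]
    refine (hasDerivAt_hammingBound q h0 h2).congr_of_eventuallyEq ?_
    filter_upwards [Iio_mem_nhds hlt] with y hy using if_pos (le_of_lt hy)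
  · rw [min_self]
    refine HasDerivAt.ite_le (hasDerivAt_hammingBound q h0 h2) ?_ (hammingBound_two_div hq)
    rw [hammingBoundDeriv_two_div hq]
    exact hasDerivAt_hammingTangent q _
  · rw [min_eq_right hgt.le, hammingBoundDeriv_two_div hq]
    refine (hasDerivAt_hammingTangent q x).congr_of_eventuallyEq ?_
    filter_upwards [Ioi_mem_nhds hgt] with y hy using if_neg (not_le.2 hy)

lemma monotoneOn_hammingBoundDeriv_min {q : ℕ} (hq : 2 ≤ q) :
    MonotoneOn (fun x => hammingBoundDeriv q (min x (2 / q))) (Ioo 0 2) := by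
  have hq0 : (0 : ℝ) < 2 / q := by positivity
  refine (monotoneOn_hammingBoundDeriv hq).comp ((monotone_id.min monotone_const).monotoneOn _) ?_
  exact fun x hx => ⟨lt_min hx.1 hq0, (min_le_left _ _).trans_lt hx.2⟩

lemma continuous_alphaHS {q : ℕ} (hq : 2 ≤ q) : Continuous (alphaHS q) := by
  rw [alphaHS_eq_ite]
  refine (continuous_hammingBound q).if_le ?_ continuous_id continuous_const
    fun x hx => hx ▸ hammingBound_two_div hq
  unfold hammingTangent
  fun_prop

lemma convexOn_alphaHS {q : ℕ} (hq : 2 ≤ q) : ConvexOn ℝ (Icc 0 2) (alphaHS q) := by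
  refine MonotoneOn.convexOn_of_deriv (convex_Icc 0 2) (continuous_alphaHS hq).continuousOn
    ?_ ?_ <;> rw [interior_Icc]
  · exact fun x hx => (hasDerivAt_alphaHS hq hx.1 hx.2).differentiableAt.differentiableWithinAt
  · refine (monotoneOn_hammingBoundDeriv_min hq).congr fun x hx => ?_
    exact (hasDerivAt_alphaHS hq hx.1 hx.2).deriv.symm

lemma contDiffOn_alphaHS {q : ℕ} (hq : 2 ≤ q) : ContDiffOn ℝ 1 (alphaHS q) (Ioo 0 2) := by
  rw [contDiffOn_one_iff_derivWithin isOpen_Ioo.uniqueDiffOn]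
  refine ⟨fun x hx => (hasDerivAt_alphaHS hq hx.1 hx.2).differentiableAt.differentiableWithinAt,
    ?_⟩
  have hmin : MapsTo (fun x => min x (2 / (q : ℝ))) (Ioo 0 2) (Ioo 0 2) := fun x hx =>
    ⟨lt_min hx.1 (by positivity), (min_le_left _ _).trans_lt hx.2⟩
  refine ((continuousOn_hammingBoundDeriv q).comp (by fun_prop) hmin).congr fun x hx => ?_
  rw [derivWithin_of_isOpen isOpen_Ioo hx]
  exact (hasDerivAt_alphaHS hq hx.1 hx.2).deriv

lemma hammingTangent_le_hammingBound {q : ℕ} (hq : 2 ≤ q) {x : ℝ} (hx : 2 / q ≤ x) (h2 : x < 2) :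
    hammingTangent q x ≤ hammingBound q x := by
  have hq0 : (0 : ℝ) < 2 / q := by positivity
  have hderiv : ∀ y ∈ interior (Icc (2 / q : ℝ) x),
      HasDerivAt (hammingBound q) (hammingBoundDeriv q y) y := by
    rw [interior_Icc]
    exact fun y hy => hasDerivAt_hammingBound q (hq0.trans hy.1) (hy.2.trans h2)
  have hslope_ge : ∀ y ∈ interior (Icc (2 / q : ℝ) x),
      hammingBoundDeriv q (2 / q) ≤ deriv (hammingBound q) y := by
    intro y hy
    rw [(hderiv y hy).deriv]
    rw [interior_Icc] at hy
    exact monotoneOn_hammingBoundDeriv hq ⟨hq0, by linarith⟩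
      ⟨hq0.trans hy.1, hy.2.trans h2⟩ hy.1.le
  have hmvt := (convex_Icc (2 / q : ℝ) x).mul_sub_le_image_sub_of_le_deriv
    (continuous_hammingBound q).continuousOn
    (fun y hy => (hderiv y hy).differentiableAt.differentiableWithinAt) hslope_ge
    _ (left_mem_Icc.2 hx) _ (right_mem_Icc.2 hx) hx
  rw [hammingBoundDeriv_two_div hq, hammingBound_two_div hq] at hmvt
  simp only [hammingTangent] at hmvt ⊢
  linarith

lemma alphaHS_le_hammingBound {q : ℕ} (hq : 2 ≤ q) {x : ℝ} (h2 : x < 2) :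
    alphaHS q x ≤ hammingBound q x := by
  rw [alphaHS_eq_ite]
  dsimp only
  split_ifs with hx
  · exact le_rfl
  · exact hammingTangent_le_hammingBound hq (not_le.1 hx).le h2

lemma alphaHS_of_two_div_le {q : ℕ} (hq : 2 ≤ q) {x : ℝ} (hx : 2 / q ≤ x) :
    alphaHS q x = hammingTangent q x := by
  rw [alphaHS_eq_ite]
  dsimp only
  split_ifs with h
  · rw [le_antisymm h hx, hammingBound_two_div hq]
  · rfl

lemma alphaHS_le_one_sub {q : ℕ} (hq : 2 ≤ q) {x : ℝ} (hx : x ∈ Icc (0 : ℝ) 1) :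
    alphaHS q x ≤ 1 - x := by
  have h0 : alphaHS q 0 = 1 := by
    rw [alphaHS, if_pos (by positivity)]
    simp [qEntropy]
  have h1 : alphaHS q 1 = 0 := by
    rw [alphaHS_of_two_div_le hq, hammingTangent, sub_self, zero_mul]
    rw [div_le_one (by positivity)]
    exact_mod_cast hq
  have hconv := (convexOn_alphaHS hq).2 (x := 0) (y := 1) (by norm_num) (by norm_num)
    (sub_nonneg.2 hx.2) hx.1 (by ring)
  simpa [h0, h1] using hconv

theorem stmt1 (q : ℕ) (hq : 2 ≤ q) :
    ConvexOn ℝ (Set.Icc (0 : ℝ) 1) (alphaHS q) ∧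
    ContDiffOn ℝ 1 (alphaHS q) (Set.Ioo (0 : ℝ) 1) ∧
    (∀ x ∈ Set.Icc (0 : ℝ) 1, alphaHS q x ≤ 1 - qEntropy q (x / 2)) ∧
    (∀ x ∈ Set.Icc (0 : ℝ) 1, alphaHS q x ≤ 1 - x) :=
  ⟨(convexOn_alphaHS hq).subset (Icc_subset_Icc_right one_le_two) (convex_Icc 0 1),
    (contDiffOn_alphaHS hq).mono (Ioo_subset_Ioo_right one_le_two),
    fun _ hx => alphaHS_le_hammingBound hq (hx.2.trans_lt one_lt_two),
    fun _ hx => alphaHS_le_one_sub hq hx⟩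
end

section
/- (Bassalygo–Elias lemma) Let F be an alphabet of size q ≥ 2, let n ≥ 1, d ≥ 0, and let L be a nonempty subset of F^n. Then |L| · A_q(n,d) ≤ q^n · A_q(n,d;L). -/
open Filter Real Set

/-- `C` is a code with minimum distance at least `d`. -/
def IsCode (q n d : ℕ) (C : Finset (Fin n → Fin q)) : Prop :=
  ∀ c ∈ C, ∀ c' ∈ C, c ≠ c' → d ≤ hammingDist c c'

/-- `A_q(n,d)`: maximum size of a code of length `n` and minimum distance at least `d`. -/
noncomputable def maxCodeSize (q n d : ℕ) : ℕ :=
  sSup {M : ℕ | ∃ C : Finset (Fin n → Fin q), IsCode q n d C ∧ C.card = M}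

/-- `A_q(n,d;L)`: maximum size of a code contained in `L` with minimum distance at least `d`. -/
noncomputable def maxCodeSizeIn (q n d : ℕ) (L : Finset (Fin n → Fin q)) : ℕ :=
  sSup {M : ℕ | ∃ C : Finset (Fin n → Fin q), C ⊆ L ∧ IsCode q n d C ∧ C.card = M}

/-! Make the alphabet `Fin q` an additive group. Translations are Hamming isometries, so each
translate `v + C` of an optimal code `C` is again an optimal code and `L ∩ (v + C)` is a code
inside `L`. Every point of `L` lies in exactly `|C|` of the `q^n` translates, hence
`|L| · A_q(n,d) = ∑_v |L ∩ (v + C)| ≤ q^n · A_q(n,d;L)`. -/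

open Finset
open scoped Pointwise

theorem hammingDist_add_left {ι : Type*} [Fintype ι] {β : ι → Type*} [∀ i, AddGroup (β i)]
    [∀ i, DecidableEq (β i)] (v x y : ∀ i, β i) :
    hammingDist (v + x) (v + y) = hammingDist x y := by
  simp only [hammingDist_eq_hammingNorm, neg_add_rev, add_assoc, neg_add_cancel_left]

theorem Finset.sum_card_inter_vadd {G : Type*} [AddGroup G] [Fintype G] [DecidableEq G]
    (A B : Finset G) : ∑ v : G, #(A ∩ (v +ᵥ B)) = #A * #B := by
  simp only [card_inter_vadd, ← card_add_eq]
  rw [← card_eq_sum_card_fiberwise fun _ _ => mem_univ _, card_product, card_neg]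

theorem IsCode.mono {q n d : ℕ} {C C' : Finset (Fin n → Fin q)} (hC : IsCode q n d C)
    (h : C' ⊆ C) : IsCode q n d C' :=
  fun c hc c' hc' hne => hC c (h hc) c' (h hc') hne

theorem IsCode.vadd {q n d : ℕ} [NeZero q] {C : Finset (Fin n → Fin q)} (hC : IsCode q n d C)
    (v : Fin n → Fin q) : IsCode q n d (v +ᵥ C) := by
  simp only [IsCode, mem_vadd_finset, vadd_eq_add]
  rintro _ ⟨c, hc, rfl⟩ _ ⟨c', hc', rfl⟩ hne
  simpa only [hammingDist_add_left] using
    hC c hc c' hc' fun h => hne (congrArg (v + ·) h)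

theorem exists_isCode_card_eq_maxCodeSize (q n d : ℕ) :
    ∃ C, IsCode q n d C ∧ #C = maxCodeSize q n d := by
  refine Nat.sSup_mem (s := {M | ∃ C, IsCode q n d C ∧ #C = M})
    ⟨0, ∅, fun c hc => absurd hc (notMem_empty c), rfl⟩ ⟨q ^ n, ?_⟩
  rintro _ ⟨C, -, rfl⟩
  simpa using card_le_univ C

theorem card_le_maxCodeSizeIn {q n d : ℕ} {C L : Finset (Fin n → Fin q)} (hCL : C ⊆ L)
    (hC : IsCode q n d C) : #C ≤ maxCodeSizeIn q n d L := by
  refine le_csSup ⟨#L, ?_⟩ ⟨C, hCL, hC, rfl⟩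
  rintro _ ⟨C', hC'L, -, rfl⟩
  exact card_le_card hC'L

theorem stmt4_general (q n d : ℕ) (hq : 2 ≤ q)
    (L : Finset (Fin n → Fin q)) :
    L.card * maxCodeSize q n d ≤ q ^ n * maxCodeSizeIn q n d L := by
  have : NeZero q := ⟨by omega⟩
  obtain ⟨C, hC, hCcard⟩ := exists_isCode_card_eq_maxCodeSize q n d
  calc #L * maxCodeSize q n d = ∑ v, #(L ∩ (v +ᵥ C)) := by
        rw [← hCcard, Finset.sum_card_inter_vadd]
    _ ≤ ∑ _v : Fin n → Fin q, maxCodeSizeIn q n d L := sum_le_sum fun v _ =>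
        card_le_maxCodeSizeIn inter_subset_left ((hC.vadd v).mono inter_subset_right)
    _ = q ^ n * maxCodeSizeIn q n d L := by simp

/-- The Bassalygo-Elias lemma. -/
theorem stmt4 (q n d : ℕ) (hq : 2 ≤ q) (hn : 1 ≤ n)
    (L : Finset (Fin n → Fin q)) (hL : L.Nonempty) :
    L.card * maxCodeSize q n d ≤ q ^ n * maxCodeSizeIn q n d L :=
  stmt4_general q n d hq L
end

section
/- (Delsarte code–anticode bound) Let F be an alphabet of size q ≥ 2, let n ≥ 1, and d ≥ 1. Then A_q(n,d) · A*_q(n,d−1) ≤ q^n. -/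
open Filter Real Set

/-- `S` is an anticode of diameter at most `w`. -/
def IsAnticode (q n w : ℕ) (S : Finset (Fin n → Fin q)) : Prop :=
  S.Nonempty ∧ ∀ c ∈ S, ∀ c' ∈ S, hammingDist c c' ≤ w

/-- `A*_q(n,w)`: maximum size of an anticode of diameter at most `w` in `F^n`. -/
noncomputable def maxAnticodeSize (q n w : ℕ) : ℕ :=
  sSup {M : ℕ | ∃ S : Finset (Fin n → Fin q), IsAnticode q n w S ∧ S.card = M}

/-! Make the alphabet an abelian group. For a code `C` of minimum distance `d` and an anticode `S`
of diameter `d - 1`, the translates `c + S`, `c ∈ C`, are pairwise disjoint: `c + s = c' + s'` gives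
`c' - c = s - s'`, and the Hamming distance is translation invariant, so `d(c, c') = d(s', s) ≤ d - 1`,
forcing `c = c'`.
Hence `|C| |S| ≤ q ^ n`. -/

theorem card_mul_card_le_of_hammingDist_lt {ι α : Type*} [Fintype ι] [DecidableEq ι] [Fintype α]
    [DecidableEq α] [AddCommGroup α] {C S : Finset (ι → α)}
    (h : ∀ c ∈ C, ∀ c' ∈ C, c ≠ c' → ∀ s ∈ S, ∀ s' ∈ S, hammingDist s s' < hammingDist c c') :
    C.card * S.card ≤ Fintype.card (ι → α) := by
  rw [← Finset.card_product, ← Finset.card_univ]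
  refine Finset.card_le_card_of_injOn (fun p ↦ p.1 + p.2)
    (fun _ _ ↦ Finset.mem_coe.2 (Finset.mem_univ _)) ?_
  rintro ⟨c, s⟩ hp ⟨c', s'⟩ hp' hsum
  simp only [Finset.coe_product, Set.mem_prod, Finset.mem_coe] at hp hp' hsum
  by_cases hcc : c = c'
  · subst hcc
    simp [add_left_cancel hsum]
  · have hdiff : -c + c' = -s' + s := by
      rw [neg_add_eq_sub, neg_add_eq_sub, sub_eq_sub_iff_add_eq_add, ← hsum, add_comm]
    have hdist : hammingDist c c' = hammingDist s' s := by
      rw [hammingDist_eq_hammingNorm, hammingDist_eq_hammingNorm, hdiff]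
    exact absurd hdist (h c hp.1 c' hp'.1 hcc s' hp'.2 s hp.2).ne'

theorem exists_card_eq_sSup_card {β : Type*} [Fintype β] {P : Finset β → Prop}
    (hP : ∃ C, P C) : ∃ C, P C ∧ C.card = sSup {M : ℕ | ∃ C, P C ∧ C.card = M} := by
  obtain ⟨C, hC⟩ := hP
  have hfin : {M : ℕ | ∃ C, P C ∧ C.card = M}.Finite :=
    (Set.finite_range Finset.card).subset <| by rintro _ ⟨C, -, rfl⟩; exact ⟨C, rfl⟩
  exact Set.Nonempty.csSup_mem (s := {M : ℕ | ∃ C, P C ∧ C.card = M}) ⟨C.card, C, hC, rfl⟩ hfin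

theorem hammingDist_lt_of_isCode_of_isAnticode {q n d : ℕ} {C S : Finset (Fin n → Fin q)}
    (hC : IsCode q n d C) (hS : IsAnticode q n (d - 1) S) :
    ∀ c ∈ C, ∀ c' ∈ C, c ≠ c' → ∀ s ∈ S, ∀ s' ∈ S, hammingDist s s' < hammingDist c c' := by
  intro c hc c' hc' hne s hs s' hs'
  have := hC c hc c' hc' hne
  have := hS.2 s hs s' hs'
  have := hammingDist_pos.2 hne
  omega

theorem stmt5_general (q n d : ℕ) (hq : 2 ≤ q) :
    maxCodeSize q n d * maxAnticodeSize q n (d - 1) ≤ q ^ n := by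
  have : NeZero q := ⟨by omega⟩
  obtain ⟨C, hC, hCcard⟩ := exists_card_eq_sSup_card (P := IsCode q n d) ⟨∅, by simp [IsCode]⟩
  obtain ⟨S, hS, hScard⟩ :=
    exists_card_eq_sSup_card (P := IsAnticode q n (d - 1)) ⟨{0}, by simp [IsAnticode]⟩
  rw [maxCodeSize, maxAnticodeSize, ← hCcard, ← hScard]
  calc C.card * S.card ≤ Fintype.card (Fin n → Fin q) :=
        card_mul_card_le_of_hammingDist_lt (hammingDist_lt_of_isCode_of_isAnticode hC hS)
    _ = q ^ n := by simp

/-- Delsarte code-anticode bound. -/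
theorem stmt5 (q n d : ℕ) (hq : 2 ≤ q) (hn : 1 ≤ n) (hd : 1 ≤ d) :
    maxCodeSize q n d * maxAnticodeSize q n (d - 1) ≤ q ^ n :=
  stmt5_general q n d hq
end

section
/- For every integer q ≥ 2, the asymptotic anticode rate α*(x) = liminf_{n→∞} (1/n) log_q A*_q(n, ⌊xn⌋) is concave on [0,1]: for all x, y ∈ [0,1] and all t ∈ [0,1], α*(t·x + (1−t)·y) ≥ t·α*(x) + (1−t)·α*(y). -/
open Filter Real Set

/-- The asymptotic anticode rate `α*(x)`. -/
noncomputable def alphaStar (q : ℕ) (x : ℝ) : ℝ :=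
  Filter.liminf (fun n : ℕ => Real.logb q (maxAnticodeSize q n ⌊x * n⌋₊) / n) Filter.atTop

/-!
Concatenating an anticode of length `m` and diameter `w₁` with one of length `n` and diameter
`w₂` gives an anticode of length `m + n` and diameter `w₁ + w₂`, so
`A*(m, w₁) A*(n, w₂) ≤ A*(m + n, w₁ + w₂)`. For `y ≤ x` and `0 < t < 1`, split a length `n` as
`⌊tn⌋ + (n - ⌊tn⌋)`: rounding the first block down only moves weight from `x` to the smaller `y`,
so the diameters fit under `⌊(tx + (1-t)y)n⌋`. Taking `log_q`, dividing by `n` and passing to the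
`liminf` (the block proportions tend to `t` and `1 - t`) gives the concavity inequality.
-/

open Topology

theorem hammingDist_append {α : Type*} [DecidableEq α] {m n : ℕ} (a a' : Fin m → α)
    (b b' : Fin n → α) :
    hammingDist (Fin.append a b) (Fin.append a' b') = hammingDist a a' + hammingDist b b' := by
  simp only [hammingDist, Finset.card_filter, Fin.sum_univ_add, Fin.append_left, Fin.append_right]

namespace IsAnticode

variable {q n w : ℕ} {S : Finset (Fin n → Fin q)}

theorem singleton (c : Fin n → Fin q) : IsAnticode q n w {c} :=
  ⟨Finset.singleton_nonempty c, by simp⟩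

theorem mono {w' : ℕ} (hS : IsAnticode q n w S) (h : w ≤ w') : IsAnticode q n w' S :=
  ⟨hS.1, fun c hc c' hc' => (hS.2 c hc c' hc').trans h⟩

theorem append {m w₁ w₂ : ℕ} {S₁ : Finset (Fin m → Fin q)} {S₂ : Finset (Fin n → Fin q)}
    (h₁ : IsAnticode q m w₁ S₁) (h₂ : IsAnticode q n w₂ S₂) :
    IsAnticode q (m + n) (w₁ + w₂) ((S₁ ×ˢ S₂).map (Fin.appendEquiv m n).toEmbedding) := by
  refine ⟨(h₁.1.product h₂.1).map, ?_⟩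
  simp only [Finset.forall_mem_map, Finset.mem_product, Equiv.coe_toEmbedding]
  rintro ⟨a, b⟩ ⟨ha, hb⟩ ⟨a', b'⟩ ⟨ha', hb'⟩
  exact (hammingDist_append a a' b b').trans_le (add_le_add (h₁.2 a ha a' ha') (h₂.2 b hb b' hb'))

end IsAnticode

section MaxAnticodeSize

variable {q n w : ℕ}

theorem bddAbove_anticode_card :
    BddAbove {M : ℕ | ∃ S : Finset (Fin n → Fin q), IsAnticode q n w S ∧ S.card = M} :=
  ⟨q ^ n, fun _ ⟨S, _, hS⟩ => hS ▸ (S.card_le_univ.trans (by simp))⟩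

theorem IsAnticode.card_le_maxAnticodeSize {S : Finset (Fin n → Fin q)}
    (hS : IsAnticode q n w S) : S.card ≤ maxAnticodeSize q n w :=
  le_csSup bddAbove_anticode_card ⟨S, hS, rfl⟩

theorem exists_isAnticode_card_eq_maxAnticodeSize (hq : 0 < q) :
    ∃ S : Finset (Fin n → Fin q), IsAnticode q n w S ∧ S.card = maxAnticodeSize q n w :=
  Nat.sSup_mem (s := {M | ∃ S, IsAnticode q n w S ∧ S.card = M})
    ⟨1, {fun _ => ⟨0, hq⟩}, .singleton _, rfl⟩ bddAbove_anticode_card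

theorem one_le_maxAnticodeSize (hq : 0 < q) : 1 ≤ maxAnticodeSize q n w :=
  (IsAnticode.singleton (w := w) fun _ => ⟨0, hq⟩).card_le_maxAnticodeSize

theorem maxAnticodeSize_le_pow : maxAnticodeSize q n w ≤ q ^ n :=
  csSup_le' fun _ ⟨S, _, hS⟩ => hS ▸ (S.card_le_univ.trans (by simp))

theorem maxAnticodeSize_mono {w' : ℕ} (h : w ≤ w') :
    maxAnticodeSize q n w ≤ maxAnticodeSize q n w' :=
  csSup_le' fun _ ⟨_, hS, hM⟩ => hM ▸ (hS.mono h).card_le_maxAnticodeSize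

theorem maxAnticodeSize_zero (hq : 0 < q) : maxAnticodeSize q 0 w = 1 :=
  le_antisymm (by simpa using maxAnticodeSize_le_pow (q := q) (n := 0) (w := w))
    (one_le_maxAnticodeSize hq)

theorem mul_maxAnticodeSize_le (hq : 0 < q) {m w₁ w₂ : ℕ} :
    maxAnticodeSize q m w₁ * maxAnticodeSize q n w₂ ≤ maxAnticodeSize q (m + n) (w₁ + w₂) := by
  obtain ⟨S₁, h₁, hc₁⟩ := exists_isAnticode_card_eq_maxAnticodeSize (n := m) (w := w₁) hq
  obtain ⟨S₂, h₂, hc₂⟩ := exists_isAnticode_card_eq_maxAnticodeSize (n := n) (w := w₂) hq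
  simpa [hc₁, hc₂] using (h₁.append h₂).card_le_maxAnticodeSize

end MaxAnticodeSize

theorem tendsto_atTop_of_tendsto_div_pos {u : ℕ → ℕ} {s : ℝ} (hs : 0 < s)
    (hu : Tendsto (fun n => (u n : ℝ) / n) atTop (𝓝 s)) : Tendsto u atTop atTop := by
  rw [← tendsto_natCast_atTop_iff (R := ℝ)]
  refine (hu.pos_mul_atTop hs tendsto_natCast_atTop_atTop).congr' ?_
  filter_upwards [eventually_ne_atTop 0] with n hn
  exact div_mul_cancel₀ _ (Nat.cast_ne_zero.2 hn)

theorem mul_liminf_le_liminf_div_mul_comp {a : ℕ → ℝ} {u : ℕ → ℕ} {s : ℝ} (ha₀ : 0 ≤ a)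
    (ha : BddAbove (range a)) (hs : 0 < s)
    (hu : Tendsto (fun n => (u n : ℝ) / n) atTop (𝓝 s)) :
    s * liminf a atTop ≤ liminf (fun n => (u n : ℝ) / n * a (u n)) atTop := by
  obtain ⟨B, hB⟩ := ha
  have ha_le (n : ℕ) : a n ≤ B := hB (mem_range_self n)
  calc s * liminf a atTop
      ≤ liminf (fun n => (u n : ℝ) / n) atTop * liminf (a ∘ u) atTop := by
        rw [hu.liminf_eq]
        refine mul_le_mul_of_nonneg_left ?_ hs.le
        exact (tendsto_atTop_of_tendsto_div_pos hs hu).liminf_le_liminf_comp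
          (isCoboundedUnder_ge_of_le _ ha_le) (isBoundedUnder_of ⟨0, ha₀⟩)
    _ ≤ liminf (fun n => (u n : ℝ) / n * a (u n)) atTop :=
        le_liminf_mul (.of_forall fun _ => by positivity) hu.isBoundedUnder_le
          (.of_forall fun n => ha₀ (u n)) (isCoboundedUnder_ge_of_le _ fun _ => ha_le _)

noncomputable def anticodeRate (q : ℕ) (x : ℝ) (n : ℕ) : ℝ :=
  logb q (maxAnticodeSize q n ⌊x * n⌋₊) / n

section AnticodeRate

variable {q : ℕ} {x : ℝ}

theorem alphaStar_eq_liminf_anticodeRate : alphaStar q x = liminf (anticodeRate q x) atTop := rfl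

theorem anticodeRate_nonneg (hq : 1 < q) (n : ℕ) : 0 ≤ anticodeRate q x n :=
  div_nonneg (logb_nonneg (by exact_mod_cast hq)
    (by exact_mod_cast one_le_maxAnticodeSize (by omega))) n.cast_nonneg

theorem anticodeRate_le_one (hq : 1 < q) (n : ℕ) : anticodeRate q x n ≤ 1 := by
  have hq' : (1 : ℝ) < q := by exact_mod_cast hq
  refine div_le_one_of_le₀ ?_ n.cast_nonneg
  calc logb q (maxAnticodeSize q n ⌊x * n⌋₊) ≤ logb q ((q : ℝ) ^ n) :=
        logb_le_logb_of_le hq' (by exact_mod_cast one_le_maxAnticodeSize (by omega))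
          (by exact_mod_cast maxAnticodeSize_le_pow)
    _ = n := by rw [logb_pow, logb_self_eq_one hq', mul_one]

theorem natCast_mul_anticodeRate (hq : 0 < q) (n : ℕ) :
    n * anticodeRate q x n = logb q (maxAnticodeSize q n ⌊x * n⌋₊) := by
  rcases eq_or_ne n 0 with rfl | hn
  · simp [maxAnticodeSize_zero hq]
  · exact mul_div_cancel₀ _ (Nat.cast_ne_zero.2 hn)

theorem floor_mul_add_floor_mul_le {x y t : ℝ} {m₁ m₂ : ℕ} (hy : 0 ≤ y) (hyx : y ≤ x)
    (hm₁ : (m₁ : ℝ) ≤ t * (m₁ + m₂)) :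
    ⌊x * m₁⌋₊ + ⌊y * m₂⌋₊ ≤ ⌊(t * x + (1 - t) * y) * (m₁ + m₂ : ℕ)⌋₊ := by
  apply Nat.le_floor
  push_cast
  have h₁ := Nat.floor_le (mul_nonneg (hy.trans hyx) m₁.cast_nonneg)
  have h₂ := Nat.floor_le (mul_nonneg hy m₂.cast_nonneg)
  nlinarith [mul_le_mul_of_nonneg_left hm₁ (sub_nonneg.2 hyx)]

theorem div_mul_anticodeRate_add_le (hq : 1 < q) {y t : ℝ} {m₁ m₂ n : ℕ} (hy : 0 ≤ y)
    (hyx : y ≤ x) (hn : m₁ + m₂ = n) (hm₁ : (m₁ : ℝ) ≤ t * n) :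
    m₁ / n * anticodeRate q x m₁ + m₂ / n * anticodeRate q y m₂ ≤
      anticodeRate q (t * x + (1 - t) * y) n := by
  subst hn
  have hq' : (1 : ℝ) < q := by exact_mod_cast hq
  have hA {m w : ℕ} : (0 : ℝ) < maxAnticodeSize q m w := by
    exact_mod_cast one_le_maxAnticodeSize (by omega)
  rw [div_mul_eq_mul_div, div_mul_eq_mul_div, ← add_div, natCast_mul_anticodeRate (by omega),
    natCast_mul_anticodeRate (by omega), anticodeRate, ← logb_mul hA.ne' hA.ne']
  refine div_le_div_of_nonneg_right (logb_le_logb_of_le hq' (mul_pos hA hA) ?_) (Nat.cast_nonneg _)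
  push_cast at hm₁
  exact_mod_cast (mul_maxAnticodeSize_le (by omega)).trans
    (maxAnticodeSize_mono (floor_mul_add_floor_mul_le hy hyx hm₁))

theorem bddAbove_range_anticodeRate (hq : 1 < q) (x : ℝ) : BddAbove (range (anticodeRate q x)) :=
  ⟨1, forall_mem_range.2 (anticodeRate_le_one hq)⟩

theorem alphaStar_concave_of_le (hq : 1 < q) {x y t : ℝ} (hy : 0 ≤ y) (hyx : y ≤ x)
    (ht : t ∈ Ioo (0 : ℝ) 1) :
    t * alphaStar q x + (1 - t) * alphaStar q y ≤ alphaStar q (t * x + (1 - t) * y) := by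
  obtain ⟨ht₀, ht₁⟩ := ht
  set u : ℕ → ℕ := fun n => ⌊t * n⌋₊
  set v : ℕ → ℕ := fun n => n - u n
  have hu_le (n : ℕ) : u n ≤ n := Nat.floor_le_of_le (by nlinarith [n.cast_nonneg (α := ℝ)])
  have hu : Tendsto (fun n => (u n : ℝ) / n) atTop (𝓝 t) :=
    (tendsto_nat_floor_mul_div_atTop ht₀.le).comp tendsto_natCast_atTop_atTop
  have hv : Tendsto (fun n => (v n : ℝ) / n) atTop (𝓝 (1 - t)) := by
    refine (tendsto_const_nhds.sub hu).congr' ?_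
    filter_upwards [eventually_ne_atTop 0] with n hn
    rw [Nat.cast_sub (hu_le n), sub_div, div_self (Nat.cast_ne_zero.2 hn)]
  set f₁ : ℕ → ℝ := fun n => u n / n * anticodeRate q x (u n)
  set f₂ : ℕ → ℝ := fun n => v n / n * anticodeRate q y (v n)
  have hf₁ (n : ℕ) : 0 ≤ f₁ n := mul_nonneg (by positivity) (anticodeRate_nonneg hq _)
  have hf₂ (n : ℕ) : 0 ≤ f₂ n := mul_nonneg (by positivity) (anticodeRate_nonneg hq _)
  have hsplit (n : ℕ) : f₁ n + f₂ n ≤ anticodeRate q (t * x + (1 - t) * y) n :=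
    div_mul_anticodeRate_add_le hq hy hyx (Nat.add_sub_cancel' (hu_le n))
      (Nat.floor_le (by positivity))
  have hsum_le (n : ℕ) : f₁ n + f₂ n ≤ 1 := (hsplit n).trans (anticodeRate_le_one hq n)
  simp only [alphaStar_eq_liminf_anticodeRate]
  calc t * liminf (anticodeRate q x) atTop + (1 - t) * liminf (anticodeRate q y) atTop
      ≤ liminf f₁ atTop + liminf f₂ atTop :=
        add_le_add
          (mul_liminf_le_liminf_div_mul_comp (anticodeRate_nonneg hq)
            (bddAbove_range_anticodeRate hq x) ht₀ hu)
          (mul_liminf_le_liminf_div_mul_comp (anticodeRate_nonneg hq)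
            (bddAbove_range_anticodeRate hq y) (sub_pos.2 ht₁) hv)
    _ ≤ liminf (f₁ + f₂) atTop :=
        le_liminf_add (isBoundedUnder_of ⟨0, hf₁⟩)
          (isBoundedUnder_of ⟨1, fun n => by linarith [hf₂ n, hsum_le n]⟩)
          (isBoundedUnder_of ⟨0, hf₂⟩)
          (isCoboundedUnder_ge_of_le _ (x := 1) fun n => by linarith [hf₁ n, hsum_le n])
    _ ≤ liminf (anticodeRate q (t * x + (1 - t) * y)) atTop :=
        liminf_le_liminf (.of_forall hsplit)
          (isBoundedUnder_of ⟨0, fun n => add_nonneg (hf₁ n) (hf₂ n)⟩)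
          (isCoboundedUnder_ge_of_le _ (anticodeRate_le_one hq))

end AnticodeRate

/-- The asymptotic anticode rate is concave on `[0,1]`. -/
theorem stmt7 (q : ℕ) (hq : 2 ≤ q) :
    ∀ x ∈ Set.Icc (0 : ℝ) 1, ∀ y ∈ Set.Icc (0 : ℝ) 1, ∀ t ∈ Set.Icc (0 : ℝ) 1,
      t * alphaStar q x + (1 - t) * alphaStar q y ≤
        alphaStar q (t * x + (1 - t) * y) := by
  rintro x ⟨hx, -⟩ y ⟨hy, -⟩ t ⟨ht₀, ht₁⟩
  rcases ht₀.eq_or_lt with rfl | ht₀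
  · simp
  rcases ht₁.eq_or_lt with rfl | ht₁
  · simp
  rcases le_total y x with hyx | hxy
  · exact alphaStar_concave_of_le hq hy hyx ⟨ht₀, ht₁⟩
  · have := alphaStar_concave_of_le hq hx hxy (t := 1 - t) ⟨sub_pos.2 ht₁, by linarith⟩
    rwa [sub_sub_cancel, add_comm ((1 - t) * y), add_comm ((1 - t) * alphaStar q y)] at this
end

section
/- Let F = Z/qZ with q ≥ 2, θ = 1 − 1/q, and let n = m + k with m, k ≥ 0. Let r be an integer with 0 ≤ r ≤ θ·m, let B(r;m) ⊆ F^m be the Hamming ball of radius r centered at the zero word, and let C ⊆ B(r;m) × F^k be a code of size M in which any two distinct codewords have Hamming distance at least d. If (m/(nθ))·(θ − r/m)² > θ − d/n, then M ≤ (d/n) / ( (m/(nθ))·(θ − r/m)² − (θ − d/n) ). -/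
/-!
Plotkin's averaging argument. The sum of the distances over ordered pairs of codewords is at
least `M (M - 1) d`. Coordinatewise, a position where `t` codewords are
nonzero contributes at most `2 M t - t² / θ` by Cauchy–Schwarz over the `q - 1` nonzero symbols;
this is at most `θ M²`, which bounds the last `k` positions. On the first `m` positions the bound
is concave in `t`, and the total weight there is at most `M r ≤ θ m M`, so the worst case is the
spread-out one, `t = M r / m` at every position.
-/

open Finset

section Counting

variable {α β : Type*} [DecidableEq β]

lemma sum_card_filter_eq_eq_sum_sq [Fintype β] (s : Finset α) (f : α → β) :
    ∑ x ∈ s, #{y ∈ s | f y = f x} = ∑ b, #{x ∈ s | f x = b} ^ 2 := by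
  rw [← sum_fiberwise_of_maps_to (t := univ) (g := f) fun _ _ => mem_univ _]
  refine sum_congr rfl fun b _ => ?_
  rw [sum_congr rfl fun x hx => by rw [(mem_filter.1 hx).2], sum_const, smul_eq_mul, sq]

lemma sum_card_filter_ne_le [Fintype β] (s : Finset α) (f : α → β) (b₀ : β) :
    ∑ x ∈ s, (#{y ∈ s | f y ≠ f x} : ℝ) ≤
      2 * #s * #{x ∈ s | f x ≠ b₀} - (#{x ∈ s | f x ≠ b₀} : ℝ) ^ 2 -
        (#{x ∈ s | f x ≠ b₀} : ℝ) ^ 2 / (Fintype.card β - 1) := by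
  set g : β → ℝ := fun b => #{x ∈ s | f x = b}
  have hpairs : ∑ x ∈ s, (#{y ∈ s | f y ≠ f x} : ℝ) = #s ^ 2 - ∑ b, g b ^ 2 := by
    have h := congrArg (Nat.cast (R := ℝ)) (sum_card_filter_eq_eq_sum_sq s f)
    push_cast at h
    rw [← h, sq, ← nsmul_eq_mul, ← sum_const, ← sum_sub_distrib]
    refine sum_congr rfl fun x _ => ?_
    rw [eq_sub_iff_add_eq, ← Nat.cast_add, add_comm, card_filter_add_card_filter_not]
  have htotal : ∑ b, g b = #s := by
    simp only [g]
    exact_mod_cast (card_eq_sum_card_fiberwise fun x _ => mem_univ (f x)).symm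
  have hsplit : g b₀ + #{x ∈ s | f x ≠ b₀} = #s := by
    simp only [g]
    exact_mod_cast card_filter_add_card_filter_not (fun x => f x = b₀)
  have hrest : ∑ b ∈ univ.erase b₀, g b = #{x ∈ s | f x ≠ b₀} := by
    linarith [add_sum_erase univ g (mem_univ b₀)]
  have hcs : (#{x ∈ s | f x ≠ b₀} : ℝ) ^ 2 / (Fintype.card β - 1) ≤
      ∑ b ∈ univ.erase b₀, g b ^ 2 := by
    have h := pow_sum_div_card_le_sum_pow (s := univ.erase b₀) (f := g)
      (fun _ _ => Nat.cast_nonneg _) 1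
    rwa [hrest, card_erase_of_mem (mem_univ _), card_univ, pow_one,
      Nat.cast_sub (Fintype.card_pos_iff.2 ⟨b₀⟩), Nat.cast_one] at h
  have hsq := add_sum_erase univ (fun b => g b ^ 2) (mem_univ b₀)
  rw [hpairs, ← hsq, ← hsplit]
  nlinarith

end Counting

section Hamming

variable {α ι β : Type*} [Fintype ι] [DecidableEq β]

lemma sum_sum_hammingDist_eq_sum_card_filter_ne (C : Finset (ι → β)) :
    ∑ c ∈ C, ∑ c' ∈ C, hammingDist c c' =
      ∑ i, ∑ c ∈ C, #{c' ∈ C | c' i ≠ c i} := by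
  simp only [hammingDist, card_filter]
  calc _ = ∑ c ∈ C, ∑ i, ∑ c' ∈ C, if c i ≠ c' i then 1 else 0 :=
        sum_congr rfl fun c _ => sum_comm
    _ = ∑ i, ∑ c ∈ C, ∑ c' ∈ C, if c i ≠ c' i then 1 else 0 := sum_comm
    _ = _ := sum_congr rfl fun i _ => sum_comm

lemma card_mul_card_sub_one_mul_le_sum_sum_hammingDist (C : Finset (ι → β)) {d : ℕ}
    (hdist : ∀ c ∈ C, ∀ c' ∈ C, c ≠ c' → d ≤ hammingDist c c') :
    #C * (#C - 1) * d ≤ ∑ c ∈ C, ∑ c' ∈ C, hammingDist c c' := by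
  rw [mul_assoc, ← smul_eq_mul]
  refine card_nsmul_le_sum _ _ _ fun c hc => ?_
  calc (#C - 1) * d = #(C.erase c) • d := by rw [card_erase_of_mem hc, smul_eq_mul]
    _ ≤ ∑ c' ∈ C.erase c, hammingDist c c' :=
      card_nsmul_le_sum _ _ _ fun c' hc' =>
        hdist c hc c' (mem_of_mem_erase hc') (ne_of_mem_erase hc').symm
    _ ≤ ∑ c' ∈ C, hammingDist c c' := sum_le_sum_of_subset (erase_subset c C)

lemma sum_card_filter_ne_zero_eq_sum_hammingNorm [Zero β] (C : Finset α) (w : α → ι → β) :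
    ∑ i, #{c ∈ C | w c i ≠ 0} = ∑ c ∈ C, hammingNorm (w c) := by
  simp only [hammingNorm, card_filter]
  exact sum_comm

end Hamming

section Quadratic

lemma one_sub_one_div_pos {q : ℝ} (hq : 1 < q) : 0 < 1 - 1 / q :=
  sub_pos.2 ((div_lt_one (by linarith)).2 hq)

lemma two_mul_mul_sub_sq_div_le {θ M t : ℝ} (hθ : 0 < θ) :
    2 * M * t - t ^ 2 / θ ≤ θ * M ^ 2 := by
  have h : t ^ 2 / θ * θ = t ^ 2 := div_mul_cancel₀ _ hθ.ne'
  nlinarith [sq_nonneg (t - θ * M)]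

lemma two_mul_mul_sub_sq_div_le_of_le {a M x y : ℝ} (ha : 0 ≤ a) (hM : 0 ≤ M) (hxy : x ≤ y)
    (hxy' : x + y ≤ 2 * a * M) : 2 * M * x - x ^ 2 / a ≤ 2 * M * y - y ^ 2 / a := by
  rcases ha.eq_or_lt with rfl | ha
  · simp only [div_zero, sub_zero]; nlinarith
  · have h : (y ^ 2 - x ^ 2) / a ≤ 2 * M * (y - x) := by
      rw [div_le_iff₀ ha]; nlinarith
    rw [sub_div] at h
    linarith

lemma sum_two_mul_mul_sub_sq_div_le {ι : Type*} (s : Finset ι) (t : ι → ℝ)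
    (ht : ∀ i ∈ s, 0 ≤ t i) {θ : ℝ} (hθ : 0 ≤ θ) (M : ℝ) :
    ∑ i ∈ s, (2 * M * t i - t i ^ 2 / θ) ≤
      2 * M * ∑ i ∈ s, t i - (∑ i ∈ s, t i) ^ 2 / (θ * #s) := by
  have hcs := pow_sum_div_card_le_sum_pow ht 1
  rw [pow_one] at hcs
  rw [sum_sub_distrib, ← mul_sum, ← sum_div, mul_comm θ, ← div_div]
  gcongr

lemma mul_sub_le_of_mul_mul_sub_one_le {M d E : ℝ} (hM : 0 ≤ M) (hd : 0 ≤ d)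
    (h : M * (M - 1) * d ≤ M ^ 2 * E) : M * (d - E) ≤ d := by
  rcases hM.eq_or_lt with rfl | hM
  · simpa using hd
  · have : (M - 1) * d ≤ M * E := le_of_mul_le_mul_left (by linarith) hM
    linarith

end Quadratic

/-- At `m = 0` both `r / m` and `r ^ 2 / (θ * m)` are the junk value `0`, hence `hr`. -/
lemma plotkin_denominator_mul_eq {θ m k d r : ℝ} (hθ : θ ≠ 0) (hn : m + k ≠ 0)
    (hr : m = 0 → r = 0) :
    (m / ((m + k) * θ) * (θ - r / m) ^ 2 - (θ - d / (m + k))) * (m + k) =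
      d - (θ * k + 2 * r - r ^ 2 / (θ * m)) := by
  rcases eq_or_ne m 0 with rfl | hm
  · rw [zero_add] at hn ⊢
    rw [hr rfl]
    field_simp
    ring
  · field_simp
    ring

section Plotkin

variable {β : Type*} [Fintype β] [DecidableEq β] [Zero β]

theorem card_mul_card_sub_one_mul_le_sum_card_filter_ne_zero {ι : Type*} [Fintype ι]
    (hβ : 2 ≤ Fintype.card β) (C : Finset (ι → β)) {d : ℕ}
    (hdist : ∀ c ∈ C, ∀ c' ∈ C, c ≠ c' → d ≤ hammingDist c c') :
    (#C : ℝ) * (#C - 1) * d ≤ ∑ i, (2 * #C * #{c ∈ C | c i ≠ 0} -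
      (#{c ∈ C | c i ≠ 0} : ℝ) ^ 2 / (1 - 1 / (Fintype.card β : ℝ))) := by
  have hβ' : (2 : ℝ) ≤ Fintype.card β := by exact_mod_cast hβ
  have hcoord (i : ι) : ∑ c ∈ C, (#{c' ∈ C | c' i ≠ c i} : ℝ) ≤
      2 * #C * #{c ∈ C | c i ≠ 0} -
        (#{c ∈ C | c i ≠ 0} : ℝ) ^ 2 / (1 - 1 / (Fintype.card β : ℝ)) := by
    have hθinv : (#{c ∈ C | c i ≠ 0} : ℝ) ^ 2 / (1 - 1 / (Fintype.card β : ℝ)) =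
        (#{c ∈ C | c i ≠ 0} : ℝ) ^ 2 +
          (#{c ∈ C | c i ≠ 0} : ℝ) ^ 2 / (Fintype.card β - 1) := by
      have : (Fintype.card β : ℝ) - 1 ≠ 0 := by linarith
      field_simp
      ring
    rw [hθinv]
    linarith [sum_card_filter_ne_le C (fun c => c i) 0]
  obtain rfl | hC := C.eq_empty_or_nonempty
  · simp
  calc (#C : ℝ) * (#C - 1) * d = ((#C * (#C - 1) * d : ℕ) : ℝ) := by
        push_cast [Nat.cast_sub hC.card_pos]; rfl
    _ ≤ ((∑ i, ∑ c ∈ C, #{c' ∈ C | c' i ≠ c i} : ℕ) : ℝ) := by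
        rw [← sum_sum_hammingDist_eq_sum_card_filter_ne]
        exact_mod_cast card_mul_card_sub_one_mul_le_sum_sum_hammingDist C hdist
    _ ≤ _ := by
        push_cast
        exact sum_le_sum fun i _ => hcoord i

theorem card_mul_card_sub_one_mul_le_of_hammingNorm_le {m k d r : ℕ}
    (hβ : 2 ≤ Fintype.card β) (hr : (r : ℝ) ≤ (1 - 1 / (Fintype.card β : ℝ)) * m)
    (C : Finset (Fin (m + k) → β))
    (hball : ∀ c ∈ C, hammingNorm (fun i : Fin m => c (Fin.castAdd k i)) ≤ r)
    (hdist : ∀ c ∈ C, ∀ c' ∈ C, c ≠ c' → d ≤ hammingDist c c') :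
    (#C : ℝ) * (#C - 1) * d ≤ (#C : ℝ) ^ 2 *
      ((1 - 1 / (Fintype.card β : ℝ)) * k + 2 * r -
        (r : ℝ) ^ 2 / ((1 - 1 / (Fintype.card β : ℝ)) * m)) := by
  have hpairs := card_mul_card_sub_one_mul_le_sum_card_filter_ne_zero hβ C hdist
  set θ : ℝ := 1 - 1 / (Fintype.card β : ℝ)
  set M : ℝ := (#C : ℝ)
  set t : Fin (m + k) → ℝ := fun i => #{c ∈ C | c i ≠ 0}
  have hθ : 0 < θ := one_sub_one_div_pos (by exact_mod_cast hβ)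
  have hM : 0 ≤ M := Nat.cast_nonneg _
  rw [Fin.sum_univ_add] at hpairs
  have hweight : ∑ j : Fin m, t (Fin.castAdd k j) ≤ M * r := by
    have h := sum_card_filter_ne_zero_eq_sum_hammingNorm C fun c j => c (Fin.castAdd k j)
    have h' : ∑ c ∈ C, hammingNorm (fun j : Fin m => c (Fin.castAdd k j)) ≤ #C * r := by
      simpa using sum_le_card_nsmul C _ r hball
    simp only [t, M]
    exact_mod_cast h ▸ h'
  have hfirst : ∑ j : Fin m, (2 * M * t (Fin.castAdd k j) - t (Fin.castAdd k j) ^ 2 / θ) ≤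
      2 * M * (M * r) - (M * r) ^ 2 / (θ * m) := by
    refine (sum_two_mul_mul_sub_sq_div_le univ _ (fun _ _ => Nat.cast_nonneg _) hθ.le M).trans ?_
    rw [card_univ, Fintype.card_fin]
    refine two_mul_mul_sub_sq_div_le_of_le (by positivity) hM hweight ?_
    have : M * r ≤ M * (θ * m) := mul_le_mul_of_nonneg_left hr hM
    linarith
  have hlast : ∑ j : Fin k, (2 * M * t (Fin.natAdd m j) - t (Fin.natAdd m j) ^ 2 / θ) ≤
      k * (θ * M ^ 2) := by
    simpa using sum_le_card_nsmul univ _ _ fun j _ => two_mul_mul_sub_sq_div_le (M := M)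
      (t := t (Fin.natAdd m j)) hθ
  calc M * (M - 1) * d ≤ 2 * M * (M * r) - (M * r) ^ 2 / (θ * m) + k * (θ * M ^ 2) := by
        linarith
    _ = _ := by ring

end Plotkin

/-- Key step in the proof of the hybrid Elias-Plotkin bound: a bound on the size of a
code contained in `B(r;m) × F^k` (with `F = ℤ/qℤ`, `n = m + k`, `θ = 1 - 1/q`). -/
theorem stmt12 (q m k d r : ℕ) (hq : 2 ≤ q)
    (hr : (r : ℝ) ≤ (1 - 1 / (q : ℝ)) * m)
    (C : Finset (Fin (m + k) → ZMod q))
    (hball : ∀ c ∈ C, hammingNorm (fun i : Fin m => c (Fin.castAdd k i)) ≤ r)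
    (hdist : ∀ c ∈ C, ∀ c' ∈ C, c ≠ c' → d ≤ hammingDist c c')
    (hpos : (1 - 1 / (q : ℝ)) - (d : ℝ) / ((m : ℝ) + k) <
      ((m : ℝ) / (((m : ℝ) + k) * (1 - 1 / (q : ℝ)))) *
        ((1 - 1 / (q : ℝ)) - (r : ℝ) / m) ^ 2) :
    (C.card : ℝ) ≤ ((d : ℝ) / ((m : ℝ) + k)) /
      (((m : ℝ) / (((m : ℝ) + k) * (1 - 1 / (q : ℝ)))) *
          ((1 - 1 / (q : ℝ)) - (r : ℝ) / m) ^ 2 -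
        ((1 - 1 / (q : ℝ)) - (d : ℝ) / ((m : ℝ) + k))) := by
  have : NeZero q := ⟨by omega⟩
  have hcore := card_mul_card_sub_one_mul_le_of_hammingNorm_le (β := ZMod q) (by simpa using hq)
    (by simpa using hr) C hball hdist
  rw [ZMod.card] at hcore
  set θ : ℝ := 1 - 1 / (q : ℝ)
  have hθ : 0 < θ := one_sub_one_div_pos (by exact_mod_cast hq)
  have hn : (0 : ℝ) < m + k := by
    refine (add_nonneg (Nat.cast_nonneg m) (Nat.cast_nonneg k)).lt_of_ne fun h => ?_
    rw [← h, zero_mul, div_zero, div_zero, zero_mul, sub_zero] at hpos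
    exact hpos.not_gt hθ
  have hden := plotkin_denominator_mul_eq (d := d) (r := r) hθ.ne' hn.ne' fun hm => by
    rw [hm, mul_zero] at hr
    exact le_antisymm hr (Nat.cast_nonneg r)
  rw [le_div_iff₀ (sub_pos.2 hpos), ← mul_le_mul_iff_of_pos_right hn, mul_assoc, hden,
    div_mul_cancel₀ _ hn.ne']
  exact mul_sub_le_of_mul_mul_sub_one_le (Nat.cast_nonneg _) (Nat.cast_nonneg _) hcore
end

section
/- Let q ≥ 3 be an integer, θ = 1 − 1/q, and define G(y) = √(y/(1−θ))·ln(y/θ) + √((1−y)/θ)·ln((1−y)/(1−θ)) for y ∈ (0,θ). Then sign(G(y)) = sign(1/q − y) for all y ∈ (0,θ): G(y) > 0 for 0 < y < 1/q, G(1/q) = 0, and G(y) < 0 for 1/q < y < θ. -/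
open Filter Real Set

/-- The function `G(y) = √(y/(1-θ))·ln(y/θ) + √((1-y)/θ)·ln((1-y)/(1-θ))`
with `θ = 1 - 1/q`. -/
noncomputable def Gfun (q : ℕ) (y : ℝ) : ℝ :=
  Real.sqrt (y / (1 - (1 - 1 / (q : ℝ)))) * Real.log (y / (1 - 1 / (q : ℝ))) +
    Real.sqrt ((1 - y) / (1 - 1 / (q : ℝ))) *
      Real.log ((1 - y) / (1 - (1 - 1 / (q : ℝ))))

/-! With `x = θ / y` and `b = (1 - y) / (1 - θ)`, both `> 1` when `0 < y < θ < 1`, one has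
`√θ √(1 - θ) G(y) = (θ - y) (g b - g x)` for `g t = √t log t / (t - 1)`. Under `t = e^{2s}`,
`g t = s / sinh s`, which is strictly decreasing on `s > 0` because `sinh` is strictly convex there.
Hence `sign G(y) = sign (x - b)`, and `x - b = (θ - y) (1 - θ - y) / (y (1 - θ))`. -/

-- `Gfun q = sqrtLogSum (1 - 1 / q)` definitionally.
noncomputable def sqrtLogSum (θ y : ℝ) : ℝ :=
  √(y / (1 - θ)) * log (y / θ) + √((1 - y) / θ) * log ((1 - y) / (1 - θ))

noncomputable def sqrtLogSlope (t : ℝ) : ℝ := √t * log t / (t - 1)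

namespace Real

theorem sign_mul_of_pos {c : ℝ} (hc : 0 < c) (r : ℝ) : sign (c * r) = sign r := by
  rcases lt_trichotomy r 0 with h | rfl | h
  · rw [sign_of_neg (mul_neg_of_pos_of_neg hc h), sign_of_neg h]
  · rw [mul_zero]
  · rw [sign_of_pos (mul_pos hc h), sign_of_pos h]

theorem sign_eq_one_iff {r : ℝ} : sign r = 1 ↔ 0 < r := by
  refine ⟨fun h => ?_, sign_of_pos⟩
  rcases lt_trichotomy r 0 with hr | rfl | hr
  · rw [sign_of_neg hr] at h; norm_num at h
  · rw [sign_zero] at h; norm_num at h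
  · exact hr

theorem sign_eq_neg_one_iff {r : ℝ} : sign r = -1 ↔ r < 0 := by
  rw [← neg_neg r, sign_neg, neg_inj, sign_eq_one_iff, Left.neg_pos_iff, neg_neg]

theorem _root_.StrictAntiOn.sign_sub {f : ℝ → ℝ} {s : Set ℝ} (hf : StrictAntiOn f s) {a b : ℝ}
    (ha : a ∈ s) (hb : b ∈ s) : sign (f b - f a) = sign (a - b) := by
  rcases lt_trichotomy a b with h | rfl | h
  · rw [sign_of_neg (sub_neg.2 (hf ha hb h)), sign_of_neg (sub_neg.2 h)]
  · simp
  · rw [sign_of_pos (sub_pos.2 (hf hb ha h)), sign_of_pos (sub_pos.2 h)]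

theorem strictConvexOn_sinh : StrictConvexOn ℝ (Ici 0) sinh :=
  strictConvexOn_of_deriv2_pos (convex_Ici 0) continuous_sinh.continuousOn fun x hx => by
    rw [interior_Ici, mem_Ioi] at hx
    simpa using hx

theorem strictMonoOn_sinh_div_self : StrictMonoOn (fun s => sinh s / s) (Ioi 0) := by
  intro x hx y hy hxy
  simpa using strictConvexOn_sinh.secant_strict_mono self_mem_Ici (mem_Ici.2 (mem_Ioi.1 hx).le)
    (mem_Ici.2 (mem_Ioi.1 hy).le) (ne_of_gt hx) (ne_of_gt hy) hxy

end Real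

theorem sqrtLogSlope_exp_two_mul {s : ℝ} (hs : s ≠ 0) :
    sqrtLogSlope (exp (2 * s)) = s / sinh s := by
  have hsqrt : √(exp (2 * s)) = exp s := by
    rw [mul_comm, exp_mul, rpow_two, sqrt_sq (exp_pos s).le]
  have hsub : exp (2 * s) - 1 = 2 * exp s * sinh s := by
    rw [sinh_eq, two_mul, exp_add, exp_neg]
    field_simp
  have : sinh s ≠ 0 := sinh_ne_zero.2 hs
  rw [sqrtLogSlope, hsqrt, log_exp, hsub]
  field_simp

theorem strictAntiOn_sqrtLogSlope : StrictAntiOn sqrtLogSlope (Ioi 1) := by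
  have hexp : ∀ t ∈ Ioi (1 : ℝ), ∃ r, 0 < r ∧ t = exp (2 * r) := fun t ht =>
    ⟨log t / 2, half_pos (log_pos ht),
      by rw [mul_div_cancel₀ _ two_ne_zero, exp_log (zero_lt_one.trans ht)]⟩
  intro x hx z hz hxz
  obtain ⟨r, hr, rfl⟩ := hexp x hx
  obtain ⟨s, hs, rfl⟩ := hexp z hz
  have hrs : r < s := by simpa using hxz
  rw [sqrtLogSlope_exp_two_mul hr.ne', sqrtLogSlope_exp_two_mul hs.ne', ← inv_div (sinh r),
    ← inv_div (sinh s)]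
  exact inv_strictAnti₀ (div_pos (sinh_pos_iff.2 hr) hr) (strictMonoOn_sinh_div_self hr hs hrs)

theorem sqrt_mul_sqrt_mul_sqrtLogSum {θ y : ℝ} (hy0 : 0 < y) (hyθ : y < θ) (hθ1 : θ < 1) :
    √θ * √(1 - θ) * sqrtLogSum θ y
      = (θ - y) * (sqrtLogSlope ((1 - y) / (1 - θ)) - sqrtLogSlope (θ / y)) := by
  have hθ0 : 0 < θ := hy0.trans hyθ
  have h1θ : 0 < 1 - θ := sub_pos.2 hθ1
  have h1y : 0 < 1 - y := by linarith
  have hlog : log (y / θ) = -log (θ / y) := by rw [← log_inv, inv_div]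
  have hb : (1 - y) / (1 - θ) - 1 = (θ - y) / (1 - θ) := by field_simp; ring
  have hx : θ / y - 1 = (θ - y) / y := by field_simp
  have hθy : θ - y ≠ 0 := by linarith
  rw [sqrtLogSum, sqrtLogSlope, sqrtLogSlope, hb, hx, hlog, sqrt_div hy0.le, sqrt_div h1y.le,
    sqrt_div h1y.le, sqrt_div hθ0.le]
  field_simp
  linear_combination (-(√(1 - θ) * √θ * log (θ / y))) * mul_self_sqrt hy0.le
    + (√y * √(1 - y) * log ((1 - y) / (1 - θ))) * mul_self_sqrt h1θ.le

theorem sign_sqrtLogSum {θ y : ℝ} (hy0 : 0 < y) (hyθ : y < θ) (hθ1 : θ < 1) :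
    sign (sqrtLogSum θ y) = sign (1 - θ - y) := by
  have hθ0 : 0 < θ := hy0.trans hyθ
  have h1θ : 0 < 1 - θ := sub_pos.2 hθ1
  have hx : θ / y ∈ Ioi 1 := (one_lt_div hy0).2 hyθ
  have hb : (1 - y) / (1 - θ) ∈ Ioi 1 := (one_lt_div h1θ).2 (by linarith)
  calc sign (sqrtLogSum θ y) = sign (√θ * √(1 - θ) * sqrtLogSum θ y) :=
        (sign_mul_of_pos (mul_pos (sqrt_pos.2 hθ0) (sqrt_pos.2 h1θ)) _).symm
    _ = sign (sqrtLogSlope ((1 - y) / (1 - θ)) - sqrtLogSlope (θ / y)) := by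
        rw [sqrt_mul_sqrt_mul_sqrtLogSum hy0 hyθ hθ1, sign_mul_of_pos (sub_pos.2 hyθ)]
    _ = sign (θ / y - (1 - y) / (1 - θ)) := strictAntiOn_sqrtLogSlope.sign_sub hx hb
    _ = sign ((θ - y) / (y * (1 - θ)) * (1 - θ - y)) := by
        congr 1
        field_simp
        ring
    _ = sign (1 - θ - y) := sign_mul_of_pos (div_pos (sub_pos.2 hyθ) (mul_pos hy0 h1θ)) _

theorem stmt18 (q : ℕ) (hq : 3 ≤ q) :
    (∀ y ∈ Set.Ioo (0 : ℝ) (1 - 1 / (q : ℝ)),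
      Real.sign (Gfun q y) = Real.sign (1 / (q : ℝ) - y)) ∧
    (∀ y : ℝ, 0 < y → y < 1 / (q : ℝ) → 0 < Gfun q y) ∧
    Gfun q (1 / (q : ℝ)) = 0 ∧
    (∀ y : ℝ, 1 / (q : ℝ) < y → y < 1 - 1 / (q : ℝ) → Gfun q y < 0) := by
  have hq3 : (3 : ℝ) ≤ q := by exact_mod_cast hq
  have hq0 : 0 < 1 / (q : ℝ) := one_div_pos.2 (by linarith)
  have hq1 : 1 / (q : ℝ) ≤ 1 / 3 := one_div_le_one_div_of_le (by norm_num) hq3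
  have hqθ : 1 / (q : ℝ) < 1 - 1 / (q : ℝ) := by linarith
  have hsign : ∀ y ∈ Ioo (0 : ℝ) (1 - 1 / (q : ℝ)), sign (Gfun q y) = sign (1 / (q : ℝ) - y) := by
    rintro y ⟨hy0, hyθ⟩
    rw [show 1 / (q : ℝ) - y = 1 - (1 - 1 / (q : ℝ)) - y by ring]
    exact sign_sqrtLogSum hy0 hyθ (by linarith)
  refine ⟨hsign, fun y hy0 hy => ?_, ?_, fun y hy hyθ => ?_⟩
  · rw [← sign_eq_one_iff, hsign y ⟨hy0, hy.trans hqθ⟩, sign_of_pos (sub_pos.2 hy)]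
  · rw [← sign_eq_zero_iff, hsign _ ⟨hq0, hqθ⟩, sub_self, sign_zero]
  · rw [← sign_eq_neg_one_iff, hsign y ⟨hq0.trans hy, hyθ⟩, sign_of_neg (sub_neg.2 hy)]
end
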